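/- arXiv:1602.01407 — 3 statements merged into one kernel-verified Lean document; each statement's English description precedes it below -/
import Mathlib

section
/- Under the assumptions of the previous lemma (IAD), together with spatial homogeneity (E[a_{j,t+δ} a_{j',t'+δ'}] = Ω(j, j', t'+δ'−t−δ) when both t+δ and t'+δ' lie in T, and E[Dz_{i,t} Dz_{i',t'}] = Γ(i, i', t'−t)) and spatially uncorrelated derivatives (Γ(i, i', d) = 0 for d ≠ 0), the weight-gradient covariance factorizes: E[Dw_{i,j,δ} Dw_{i',j',δ'}] = β(δ, δ') · Ω(j, j', δ'−δ) · Γ(i, i', 0), where β(δ, δ') = |{t ∈ T : t+δ ∈ T, t+δ' ∈ T}|. -/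
/-!
Expanding both sums, independence splits every term `E[a a' Dz Dz']` into
`E[a a'] · E[Dz Dz']`. Since the derivatives are uncorrelated at distinct locations, only the
diagonal `t = t'` survives, leaving `Γ(i,i',0) · ∑_t E[a_{j,t+δ} a_{j',t+δ'}]`. By homogeneity
each remaining term is `Ω(j,j',δ'-δ)` when `t+δ` and `t+δ'` both lie in `T`, and `0` otherwise
because the activations vanish off `T`; counting these `t` gives `β(δ,δ')`.
-/

open MeasureTheory ProbabilityTheory Finset

section Independence

variable {Ω ι κ : Type*} [MeasurableSpace Ω] {μ : Measure Ω}
  {X : ι → Ω → ℝ} {Y : κ → Ω → ℝ}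

lemma indepFun_mul_mul_of_indep_iSup_comap
    (h : Indep (⨆ p, MeasurableSpace.comap (X p) inferInstance)
      (⨆ q, MeasurableSpace.comap (Y q) inferInstance) μ) (p p' : ι) (q q' : κ) :
    IndepFun (fun ω => X p ω * X p' ω) (fun ω => Y q ω * Y q' ω) μ := by
  have hX : ∀ p, Measurable[⨆ p, MeasurableSpace.comap (X p) inferInstance] (X p) := fun p =>
    measurable_iff_comap_le.mpr (le_iSup (fun p => MeasurableSpace.comap (X p) _) p)
  have hY : ∀ q, Measurable[⨆ q, MeasurableSpace.comap (Y q) inferInstance] (Y q) := fun q =>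
    measurable_iff_comap_le.mpr (le_iSup (fun q => MeasurableSpace.comap (Y q) _) q)
  exact indep_of_indep_of_le_right
    (indep_of_indep_of_le_left h (measurable_iff_comap_le.mp ((hX p).mul (hX p'))))
    (measurable_iff_comap_le.mp ((hY q).mul (hY q')))

variable (h : Indep (⨆ p, MeasurableSpace.comap (X p) inferInstance)
      (⨆ q, MeasurableSpace.comap (Y q) inferInstance) μ)
  (hX : ∀ p, MemLp (X p) 2 μ) (hY : ∀ q, MemLp (Y q) 2 μ)
include h hX hY

lemma integrable_mul_mul_of_indep_iSup_comap (p p' : ι) (q q' : κ) :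
    Integrable (fun ω => (X p ω * Y q ω) * (X p' ω * Y q' ω)) μ := by
  simp_rw [mul_mul_mul_comm]
  exact (indepFun_mul_mul_of_indep_iSup_comap h p p' q q').integrable_mul
    ((hX p).integrable_mul (hX p')) ((hY q).integrable_mul (hY q'))

lemma integral_mul_mul_of_indep_iSup_comap (p p' : ι) (q q' : κ) :
    ∫ ω, (X p ω * Y q ω) * (X p' ω * Y q' ω) ∂μ
      = (∫ ω, X p ω * X p' ω ∂μ) * ∫ ω, Y q ω * Y q' ω ∂μ := by
  simp_rw [mul_mul_mul_comm]
  exact (indepFun_mul_mul_of_indep_iSup_comap h p p' q q').integral_mul_eq_mul_integral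
    ((hX p).aestronglyMeasurable.mul (hX p').aestronglyMeasurable)
    ((hY q).aestronglyMeasurable.mul (hY q').aestronglyMeasurable)

lemma integral_sum_mul_sum_of_indep_iSup_comap {σ τ : Type*} (s : Finset σ) (t : Finset τ)
    (u : σ → ι) (v : σ → κ) (u' : τ → ι) (v' : τ → κ) :
    ∫ ω, (∑ x ∈ s, X (u x) ω * Y (v x) ω) * (∑ y ∈ t, X (u' y) ω * Y (v' y) ω) ∂μ
      = ∑ x ∈ s, ∑ y ∈ t,
          (∫ ω, X (u x) ω * X (u' y) ω ∂μ) * ∫ ω, Y (v x) ω * Y (v' y) ω ∂μ := by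
  have hint := integrable_mul_mul_of_indep_iSup_comap h hX hY
  simp_rw [sum_mul_sum]
  rw [integral_finsetSum s fun x _ => integrable_finsetSum t fun y _ => hint _ _ _ _]
  refine sum_congr rfl fun x _ => ?_
  rw [integral_finsetSum t fun y _ => hint _ _ _ _]
  exact sum_congr rfl fun y _ => integral_mul_mul_of_indep_iSup_comap h hX hY _ _ _ _

end Independence

lemma integral_mul_eq_ite_of_eq_zero_off {Ω G : Type*} [MeasurableSpace Ω] {μ : Measure Ω}
    [Sub G] [DecidableEq G] {T : Finset G} {b b' : G → Ω → ℝ} {c : G → ℝ}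
    (hb : ∀ s ∉ T, b s = 0) (hb' : ∀ s ∉ T, b' s = 0)
    (hc : ∀ s s', s ∈ T → s' ∈ T → ∫ ω, b s ω * b' s' ω ∂μ = c (s' - s))
    (s s' : G) :
    ∫ ω, b s ω * b' s' ω ∂μ = if s ∈ T ∧ s' ∈ T then c (s' - s) else 0 := by
  split_ifs with hs
  · exact hc s s' hs.1 hs.2
  · rcases not_and_or.mp hs with hs | hs <;> simp [hb, hb', hs]

theorem kfc_factorization_general {α : Type*} [MeasurableSpace α] (μ : Measure α)
    {J I : Type*} (T : Finset (ℤ × ℤ))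
    (a : J → ℤ × ℤ → α → ℝ) (Dz : I → ℤ × ℤ → α → ℝ)
    (Ωf : J → J → ℤ × ℤ → ℝ) (Γf : I → I → ℤ × ℤ → ℝ)
    (ha_L2 : ∀ j t, MemLp (a j t) 2 μ) (hDz_L2 : ∀ i t, MemLp (Dz i t) 2 μ)
    -- IAD: the activations are independent of the pre-activation derivatives
    (hIAD : Indep
      (⨆ p : J × (ℤ × ℤ), MeasurableSpace.comap (a p.1 p.2) inferInstance)
      (⨆ p : I × (ℤ × ℤ), MeasurableSpace.comap (Dz p.1 p.2) inferInstance) μ)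
    -- activations vanish outside the grid
    (ha_zero : ∀ j t, t ∉ T → a j t = 0)
    -- SH for activations and derivatives
    (hSH_a : ∀ j j' s s', s ∈ T → s' ∈ T →
      (∫ ω, a j s ω * a j' s' ω ∂μ) = Ωf j j' (s' - s))
    (hSH_Dz : ∀ i i' t t', t ∈ T → t' ∈ T →
      (∫ ω, Dz i t ω * Dz i' t' ω ∂μ) = Γf i i' (t' - t))
    -- SUD: derivatives at distinct locations are uncorrelated
    (hSUD : ∀ i i' d, d ≠ (0 : ℤ × ℤ) → Γf i i' d = 0)
    (i i' : I) (j j' : J) (δ δ' : ℤ × ℤ) :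
    ∫ ω, (∑ t ∈ T, a j (t + δ) ω * Dz i t ω) *
         (∑ t' ∈ T, a j' (t' + δ') ω * Dz i' t' ω) ∂μ
      = ((T.filter (fun t => t + δ ∈ T ∧ t + δ' ∈ T)).card : ℝ) *
          Ωf j j' (δ' - δ) * Γf i i' 0 := by
  have hDz : ∀ t ∈ T, ∀ t' ∈ T,
      ∫ ω, Dz i t ω * Dz i' t' ω ∂μ = if t = t' then Γf i i' 0 else 0 := by
    intro t ht t' ht'
    rw [hSH_Dz i i' t t' ht ht']
    split_ifs with htt'
    · rw [htt', sub_self]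
    · exact hSUD i i' _ (sub_ne_zero.mpr (Ne.symm htt'))
  have ha (t : ℤ × ℤ) : ∫ ω, a j (t + δ) ω * a j' (t + δ') ω ∂μ
      = if t + δ ∈ T ∧ t + δ' ∈ T then Ωf j j' (δ' - δ) else 0 := by
    rw [integral_mul_eq_ite_of_eq_zero_off (G := ℤ × ℤ) (ha_zero j) (ha_zero j') (hSH_a j j'),
      add_sub_add_left_eq_sub]
  calc _ = ∑ t ∈ T, ∑ t' ∈ T, (∫ ω, a j (t + δ) ω * a j' (t' + δ') ω ∂μ) *
            ∫ ω, Dz i t ω * Dz i' t' ω ∂μ :=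
        integral_sum_mul_sum_of_indep_iSup_comap (X := fun p : J × (ℤ × ℤ) => a p.1 p.2)
          (Y := fun p : I × (ℤ × ℤ) => Dz p.1 p.2) hIAD (fun p => ha_L2 p.1 p.2)
          (fun p => hDz_L2 p.1 p.2) T T (fun t => (j, t + δ)) (fun t => (i, t))
          (fun t => (j', t + δ')) (fun t => (i', t))
    _ = ∑ t ∈ T, (∫ ω, a j (t + δ) ω * a j' (t + δ') ω ∂μ) * Γf i i' 0 := by
        refine sum_congr rfl fun t ht => ?_
        rw [sum_congr rfl fun t' ht' => by rw [hDz t ht t' ht']]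
        simp only [mul_ite, mul_zero, sum_ite_eq, if_pos ht]
    _ = _ := by
        simp only [ha, ite_mul, zero_mul, ← sum_filter, sum_const, nsmul_eq_mul, mul_assoc]

/-- **Theorem 1 of the KFC paper.**  Under independence of activations and
derivatives (IAD), spatial homogeneity (SH) of the second moments, vanishing of the
activations outside the grid `T`, and spatially uncorrelated derivatives (SUD),
the weight-gradient second moments factorize as
`E[Dw i j δ * Dw i' j' δ'] = β(δ,δ') · Ω(j,j',δ'−δ) · Γ(i,i',0)`, where
`β(δ,δ') = |{t ∈ T : t+δ ∈ T ∧ t+δ' ∈ T}|`. -/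
theorem kfc_factorization {α : Type*} [MeasurableSpace α] (μ : Measure α)
    [IsProbabilityMeasure μ]
    {J I : Type*} (T : Finset (ℤ × ℤ))
    (a : J → ℤ × ℤ → α → ℝ) (Dz : I → ℤ × ℤ → α → ℝ)
    (Ωf : J → J → ℤ × ℤ → ℝ) (Γf : I → I → ℤ × ℤ → ℝ)
    (ha_meas : ∀ j t, Measurable (a j t)) (hDz_meas : ∀ i t, Measurable (Dz i t))
    (ha_L2 : ∀ j t, MemLp (a j t) 2 μ) (hDz_L2 : ∀ i t, MemLp (Dz i t) 2 μ)
    -- IAD: the activations are independent of the pre-activation derivatives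
    (hIAD : Indep
      (⨆ p : J × (ℤ × ℤ), MeasurableSpace.comap (a p.1 p.2) inferInstance)
      (⨆ p : I × (ℤ × ℤ), MeasurableSpace.comap (Dz p.1 p.2) inferInstance) μ)
    -- activations vanish outside the grid
    (ha_zero : ∀ j t, t ∉ T → a j t = 0)
    -- SH for activations and derivatives
    (hSH_a : ∀ j j' s s', s ∈ T → s' ∈ T →
      (∫ ω, a j s ω * a j' s' ω ∂μ) = Ωf j j' (s' - s))
    (hSH_Dz : ∀ i i' t t', t ∈ T → t' ∈ T →
      (∫ ω, Dz i t ω * Dz i' t' ω ∂μ) = Γf i i' (t' - t))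
    -- SUD: derivatives at distinct locations are uncorrelated
    (hSUD : ∀ i i' d, d ≠ (0 : ℤ × ℤ) → Γf i i' d = 0)
    (i i' : I) (j j' : J) (δ δ' : ℤ × ℤ) :
    ∫ ω, (∑ t ∈ T, a j (t + δ) ω * Dz i t ω) *
         (∑ t' ∈ T, a j' (t' + δ') ω * Dz i' t' ω) ∂μ
      = ((T.filter (fun t => t + δ ∈ T ∧ t + δ' ∈ T)).card : ℝ) *
          Ωf j j' (δ' - δ) * Γf i i' 0 :=
  kfc_factorization_general μ T a Dz Ωf Γf ha_L2 hDz_L2 hIAD ha_zero hSH_a hSH_Dz hSUD i i' j j' δ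
    δ'
end

section
/- Under assumptions IAD and SH, the covariance of a weight derivative with a bias derivative is E[Dw_{i,j,δ} Db_{i'}] = β(δ) M(j) Γ(i, i', 0), where Db_{i'} = Σ_{t'∈T} Dz_{i',t'}, M(j) = E[a_{j,t}] for t ∈ T, and β(δ) = |{t ∈ T : t+δ ∈ T}|, additionally assuming SUD (Γ(i,i',d)=0 for d≠0). -/
/-!
Expanding the product, each term `E[a_{j,t+δ} Dz_{i,t} Dz_{i',t'}]` factors by IAD into
`E[a_{j,t+δ}] Γ(i,i',t'-t)`. SUD leaves only the diagonal `t' = t`, and `E[a_{j,t+δ}]` is `M(j)`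
when `t + δ ∈ T` and `0` otherwise, so summing over `t` counts `β(δ)`.
-/

open MeasureTheory ProbabilityTheory

section

variable {Ω : Type*} [MeasurableSpace Ω] {μ : Measure Ω}

theorem indepFun_mul_of_indep_iSup_comap {ι κ : Type*} {f : ι → Ω → ℝ} {g : κ → Ω → ℝ}
    (h : Indep (⨆ p, MeasurableSpace.comap (f p) inferInstance)
      (⨆ q, MeasurableSpace.comap (g q) inferInstance) μ) (p : ι) (q q' : κ) :
    IndepFun (f p) (g q * g q') μ := by
  have hg : ∀ q, Measurable[⨆ q, MeasurableSpace.comap (g q) inferInstance] (g q) :=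
    fun q => Measurable.of_comap_le (le_iSup (fun q => MeasurableSpace.comap (g q) _) q)
  exact indep_of_indep_of_le_right
    (indep_of_indep_of_le_left h (le_iSup (fun p => MeasurableSpace.comap (f p) _) p))
    ((hg q).mul (hg q')).comap_le

theorem integral_sum_mul_mul_sum_eq {ι : Type*} (s s' : Finset ι) {A B C : ι → Ω → ℝ}
    (hA : ∀ t, Integrable (A t) μ) (hB : ∀ t, MemLp (B t) 2 μ) (hC : ∀ t, MemLp (C t) 2 μ)
    (hind : ∀ t t', IndepFun (A t) (B t * C t') μ) :
    ∫ ω, (∑ t ∈ s, A t ω * B t ω) * (∑ t' ∈ s', C t' ω) ∂μ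
      = ∑ t ∈ s, (∫ ω, A t ω ∂μ) * ∑ t' ∈ s', ∫ ω, B t ω * C t' ω ∂μ := by
  have hBC : ∀ t t', Integrable (B t * C t') μ := fun t t' => (hB t).integrable_mul (hC t')
  have hterm : ∀ t t', Integrable (A t * (B t * C t')) μ :=
    fun t t' => (hind t t').integrable_mul (hA t) (hBC t t')
  calc ∫ ω, (∑ t ∈ s, A t ω * B t ω) * (∑ t' ∈ s', C t' ω) ∂μ
      = ∫ ω, ∑ t ∈ s, ∑ t' ∈ s', (A t * (B t * C t')) ω ∂μ := by
        simp only [Finset.sum_mul_sum, Pi.mul_apply, mul_assoc]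
    _ = ∑ t ∈ s, ∑ t' ∈ s', ∫ ω, (A t * (B t * C t')) ω ∂μ := by
        rw [integral_finsetSum _ fun t _ => integrable_finsetSum _ fun t' _ => hterm t t']
        exact Finset.sum_congr rfl fun t _ => integral_finsetSum _ fun t' _ => hterm t t'
    _ = ∑ t ∈ s, (∫ ω, A t ω ∂μ) * ∑ t' ∈ s', ∫ ω, B t ω * C t' ω ∂μ := by
        simp only [Finset.mul_sum]
        exact Finset.sum_congr rfl fun t _ => Finset.sum_congr rfl fun t' _ =>
          (hind t t').integral_mul_eq_mul_integral (hA t).aestronglyMeasurable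
            (hBC t t').aestronglyMeasurable

end

theorem Finset.sum_add_right_eq_card_filter_mul {G : Type*} [Add G] [DecidableEq G]
    (T : Finset G) (δ : G) {m : G → ℝ} {c : ℝ} (hzero : ∀ t ∉ T, m t = 0)
    (hconst : ∀ t ∈ T, m t = c) :
    ∑ t ∈ T, m (t + δ) = (T.filter (fun t => t + δ ∈ T)).card * c := by
  rw [← Finset.sum_filter_add_sum_filter_not T (fun t => t + δ ∈ T),
    Finset.sum_congr rfl fun t ht => hconst _ (Finset.mem_filter.mp ht).2,
    Finset.sum_congr rfl fun t ht => hzero _ (Finset.mem_filter.mp ht).2]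
  simp

theorem kfc_weight_bias_factorization_general {α : Type*} [MeasurableSpace α] (μ : Measure α)
    [IsProbabilityMeasure μ]
    {J I : Type*} (T : Finset (ℤ × ℤ))
    (a : J → ℤ × ℤ → α → ℝ) (Dz : I → ℤ × ℤ → α → ℝ)
    (M : J → ℝ) (Γf : I → I → ℤ × ℤ → ℝ)
    (ha_L2 : ∀ j t, MemLp (a j t) 2 μ) (hDz_L2 : ∀ i t, MemLp (Dz i t) 2 μ)
    -- IAD: the activations are independent of the pre-activation derivatives
    (hIAD : Indep
      (⨆ p : J × (ℤ × ℤ), MeasurableSpace.comap (a p.1 p.2) inferInstance)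
      (⨆ p : I × (ℤ × ℤ), MeasurableSpace.comap (Dz p.1 p.2) inferInstance) μ)
    -- activations vanish outside the grid
    (ha_zero : ∀ j t, t ∉ T → a j t = 0)
    -- SH: first moments of activations are spatially constant
    (hM : ∀ j t, t ∈ T → (∫ ω, a j t ω ∂μ) = M j)
    -- SH for derivatives
    (hSH_Dz : ∀ i i' t t', t ∈ T → t' ∈ T →
      (∫ ω, Dz i t ω * Dz i' t' ω ∂μ) = Γf i i' (t' - t))
    -- SUD: derivatives at distinct locations are uncorrelated
    (hSUD : ∀ i i' d, d ≠ (0 : ℤ × ℤ) → Γf i i' d = 0)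
    (i i' : I) (j : J) (δ : ℤ × ℤ) :
    ∫ ω, (∑ t ∈ T, a j (t + δ) ω * Dz i t ω) * (∑ t' ∈ T, Dz i' t' ω) ∂μ
      = ((T.filter (fun t => t + δ ∈ T)).card : ℝ) * M j * Γf i i' 0 := by
  have hdiag : ∀ t ∈ T, ∑ t' ∈ T, ∫ ω, Dz i t ω * Dz i' t' ω ∂μ = Γf i i' 0 := by
    intro t ht
    rw [Finset.sum_eq_single_of_mem t ht fun t' ht' hne => by
        rw [hSH_Dz i i' t t' ht ht', hSUD i i' _ (sub_ne_zero.mpr hne)],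
      hSH_Dz i i' t t ht ht, sub_self]
  have hmean : ∑ t ∈ T, ∫ ω, a j (t + δ) ω ∂μ = (T.filter (fun t => t + δ ∈ T)).card * M j :=
    T.sum_add_right_eq_card_filter_mul δ (m := fun t => ∫ ω, a j t ω ∂μ)
      (fun t ht => by simp [ha_zero j t ht]) (hM j)
  rw [integral_sum_mul_mul_sum_eq T T (fun t => (ha_L2 j (t + δ)).integrable one_le_two)
      (hDz_L2 i) (hDz_L2 i') fun t t' =>
        indepFun_mul_of_indep_iSup_comap hIAD (j, t + δ) (i, t) (i', t'),
    Finset.sum_congr rfl fun t ht => by rw [hdiag t ht], ← Finset.sum_mul, hmean]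

/-- Under IAD, SH and SUD, the covariance of a weight derivative with a bias
derivative is `E[Dw i j δ * Db i'] = β(δ) · M(j) · Γ(i,i',0)`, where
`Db i' = ∑ t' in T, Dz i' t'`, `M j` is the (spatially constant) mean activation,
and `β(δ) = |{t ∈ T : t+δ ∈ T}|`. -/
theorem kfc_weight_bias_factorization {α : Type*} [MeasurableSpace α] (μ : Measure α)
    [IsProbabilityMeasure μ]
    {J I : Type*} (T : Finset (ℤ × ℤ))
    (a : J → ℤ × ℤ → α → ℝ) (Dz : I → ℤ × ℤ → α → ℝ)
    (M : J → ℝ) (Γf : I → I → ℤ × ℤ → ℝ)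
    (ha_meas : ∀ j t, Measurable (a j t)) (hDz_meas : ∀ i t, Measurable (Dz i t))
    (ha_L2 : ∀ j t, MemLp (a j t) 2 μ) (hDz_L2 : ∀ i t, MemLp (Dz i t) 2 μ)
    -- IAD: the activations are independent of the pre-activation derivatives
    (hIAD : Indep
      (⨆ p : J × (ℤ × ℤ), MeasurableSpace.comap (a p.1 p.2) inferInstance)
      (⨆ p : I × (ℤ × ℤ), MeasurableSpace.comap (Dz p.1 p.2) inferInstance) μ)
    -- activations vanish outside the grid
    (ha_zero : ∀ j t, t ∉ T → a j t = 0)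
    -- SH: first moments of activations are spatially constant
    (hM : ∀ j t, t ∈ T → (∫ ω, a j t ω ∂μ) = M j)
    -- SH for derivatives
    (hSH_Dz : ∀ i i' t t', t ∈ T → t' ∈ T →
      (∫ ω, Dz i t ω * Dz i' t' ω ∂μ) = Γf i i' (t' - t))
    -- SUD: derivatives at distinct locations are uncorrelated
    (hSUD : ∀ i i' d, d ≠ (0 : ℤ × ℤ) → Γf i i' d = 0)
    (i i' : I) (j : J) (δ : ℤ × ℤ) :
    ∫ ω, (∑ t ∈ T, a j (t + δ) ω * Dz i t ω) * (∑ t' ∈ T, Dz i' t' ω) ∂μ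
      = ((T.filter (fun t => t + δ ∈ T)).card : ℝ) * M j * Γf i i' 0 :=
  kfc_weight_bias_factorization_general μ T a Dz M Γf ha_L2 hDz_L2 hIAD ha_zero hM hSH_Dz hSUD i i'
    j δ
end

section
/- Suppose the layer parameters of two networks are related by W†_H = T_ℓ^{−T} W_H E^{−T}, where T_ℓ and E are invertible, and the transformed network is updated by W†_H ← W†_H − α P† (∇† h) Q† for matrices P†, Q†. Then the corresponding update in the original parameterization is W_H ← W_H − α P (∇ h) Q with P = T_ℓᵀ P† T_ℓ and Q = E Q† Eᵀ, where ∇† h = T_ℓ^{−1}(∇ h)E^{−1} is the gradient under the reparameterization. -/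
open Matrix

/-- **Lemma 2 (update pull-back).**  If the parameters of the two networks are
related by `W† = T⁻ᵀ W E⁻ᵀ` (equivalently `W = Tᵀ W† Eᵀ`), the gradient
transforms by the chain rule as `∇† h = T (∇ h) E`, and the transformed network is
updated by `W† ← W† − α P† (∇† h) Q†`, then the corresponding update in the
original parameterization is `W ← W − α P (∇ h) Q` with `P = Tᵀ P† T` and
`Q = E Q† Eᵀ`. -/
theorem update_pullback {I K : ℕ}
    (T : Matrix (Fin I) (Fin I) ℝ) (E : Matrix (Fin K) (Fin K) ℝ)
    (hT : IsUnit T.det) (hE : IsUnit E.det)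
    (W W' G G' : Matrix (Fin I) (Fin K) ℝ)
    (P' : Matrix (Fin I) (Fin I) ℝ) (Q' : Matrix (Fin K) (Fin K) ℝ) (α : ℝ)
    (hW : W' = T⁻¹ᵀ * W * E⁻¹ᵀ)
    (hG : G' = T * G * E) :
    Tᵀ * (W' - α • (P' * G' * Q')) * Eᵀ
      = W - α • ((Tᵀ * P' * T) * G * (E * Q' * Eᵀ)) := by
  have hTT : Tᵀ * T⁻¹ᵀ = 1 := by
    rw [← transpose_mul, Matrix.nonsing_inv_mul T hT, transpose_one]
  have hEE : E⁻¹ᵀ * Eᵀ = 1 := by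
    rw [← transpose_mul, Matrix.mul_nonsing_inv E hE, transpose_one]
  subst hW hG
  rw [Matrix.mul_sub, Matrix.sub_mul, Matrix.mul_smul, Matrix.smul_mul]
  congr 1
  · calc Tᵀ * (T⁻¹ᵀ * W * E⁻¹ᵀ) * Eᵀ
        = (Tᵀ * T⁻¹ᵀ) * (W * (E⁻¹ᵀ * Eᵀ)) := by simp only [Matrix.mul_assoc]
      _ = W := by rw [hTT, hEE, Matrix.one_mul, Matrix.mul_one]
  · congr 1; simp only [Matrix.mul_assoc]
end
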